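/- arXiv:math/0307119 — 3 statements merged into one kernel-verified Lean document; each statement's English description precedes it below -/
import Mathlib

section
/- If H and K are Hamiltonian maps of the canonical k-symplectic structure on ℝ^{n(k+1)}, then the map {H,K} : ℝ^{n(k+1)} → ℝ^k with components {H,K}ᵖ = Σₛ ( ∂Hᵖ/∂xˢ · ∂Kᵖ/∂x^{ps} − ∂Hᵖ/∂x^{ps} · ∂Kᵖ/∂xˢ ) is again a Hamiltonian map of this structure. -/
/-!
Common setup: M = ℝ^{n(k+1)} with coordinates (x^{pi}, xⁱ), modeled as
`(Fin k → Fin n → ℝ) × (Fin n → ℝ)`, carrying the canonical k-symplectic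
structure θᵖ = Σᵢ dx^{pi}∧dxⁱ, E given by dx¹ = … = dxⁿ = 0 (foliation with
leaves ℝ^{nk}×{x}).
-/

/-- A point of M = ℝ^{n(k+1)}: (ξ, x) with ξ = (x^{pi}) and x = (xⁱ). -/
abbrev KPt (n k : ℕ) := (Fin k → Fin n → ℝ) × (Fin n → ℝ)

/-- Partial derivative ∂F/∂x^{pi}. -/
noncomputable def pdXi (n k : ℕ) (p : Fin k) (i : Fin n)
    (F : KPt n k → ℝ) (m : KPt n k) : ℝ :=
  fderiv ℝ F m (Pi.single p (Pi.single i 1), 0)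

/-- Partial derivative ∂F/∂xⁱ. -/
noncomputable def pdX (n k : ℕ) (i : Fin n) (F : KPt n k → ℝ) (m : KPt n k) : ℝ :=
  fderiv ℝ F m (0, Pi.single i 1)

/-- A vector field X = (A,B) on M is foliated iff its x-component B depends
only on x. -/
def IsFoliatedVF (n k : ℕ) (X : KPt n k → KPt n k) : Prop :=
  ∀ m m' : KPt n k, m.2 = m'.2 → (X m).2 = (X m').2

/-- `X` is the Hamiltonian vector field of `H`: a smooth foliated vector field
with i(X)θᵖ = −dHᵖ for every p, i.e. X^{pi} = −∂Hᵖ/∂xⁱ and Xⁱ = ∂Hᵖ/∂x^{pi}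
for all p, i. -/
def IsHamVF (n k : ℕ) (H : KPt n k → Fin k → ℝ) (X : KPt n k → KPt n k) : Prop :=
  ContDiff ℝ (⊤ : ℕ∞) X ∧ IsFoliatedVF n k X ∧
    (∀ (m : KPt n k) (p : Fin k) (i : Fin n),
      (X m).1 p i = -pdX n k i (fun q => H q p) m) ∧
    (∀ (m : KPt n k) (p : Fin k) (i : Fin n),
      (X m).2 i = pdXi n k p i (fun q => H q p) m)

/-- `H : M → ℝ^k` is a Hamiltonian map of the canonical k-symplectic structure. -/
def IsHamiltonianMap (n k : ℕ) (H : KPt n k → Fin k → ℝ) : Prop :=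
  ∃ X : KPt n k → KPt n k, IsHamVF n k H X

/-- The bracket of two maps H, K : M → ℝ^k:
`{H,K}ᵖ = Σₛ ( ∂Hᵖ/∂xˢ · ∂Kᵖ/∂x^{ps} − ∂Hᵖ/∂x^{ps} · ∂Kᵖ/∂xˢ )`. -/
noncomputable def kBracket (n k : ℕ) (H K : KPt n k → Fin k → ℝ) :
    KPt n k → Fin k → ℝ :=
  fun m p => ∑ s,
    (pdX n k s (fun q => H q p) m * pdXi n k p s (fun q => K q p) m -
      pdXi n k p s (fun q => H q p) m * pdX n k s (fun q => K q p) m)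


section helpers
variable {E : Type*} [NormedAddCommGroup E] [NormedSpace ℝ E]

/-- Directional derivative. -/
noncomputable def pdv (v : E) (F : E → ℝ) (m : E) : ℝ := fderiv ℝ F m v

lemma pdv_contDiff {F : E → ℝ} (hF : ContDiff ℝ (⊤ : ℕ∞) F) (v : E) :
    ContDiff ℝ (⊤ : ℕ∞) (pdv v F) :=
  (hF.fderiv_right (by simp)).clm_apply contDiff_const

lemma pdv_sum {ι : Type*} [Fintype ι] {F : ι → E → ℝ} {m : E}
    (hF : ∀ i, DifferentiableAt ℝ (F i) m) (v : E) :
    pdv v (fun y => ∑ i, F i y) m = ∑ i, pdv v (F i) m := by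
  simp [pdv, fderiv_fun_sum (fun i _ => hF i)]

lemma pdv_sub {F G : E → ℝ} {m : E}
    (hF : DifferentiableAt ℝ F m) (hG : DifferentiableAt ℝ G m) (v : E) :
    pdv v (fun y => F y - G y) m = pdv v F m - pdv v G m := by
  simp [pdv, fderiv_fun_sub hF hG]

lemma pdv_mul {F G : E → ℝ} {m : E}
    (hF : DifferentiableAt ℝ F m) (hG : DifferentiableAt ℝ G m) (v : E) :
    pdv v (fun y => F y * G y) m = F m * pdv v G m + G m * pdv v F m := by
  simp [pdv, fderiv_fun_mul hF hG, smul_eq_mul]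

lemma pdv_neg {F : E → ℝ} {m : E} (v : E) :
    pdv v (fun y => -F y) m = -pdv v F m := by
  simp [pdv, fderiv_neg]

lemma pdv_pdv {F : E → ℝ} (hF : ContDiff ℝ (⊤ : ℕ∞) F) (v w m : E) :
    pdv v (pdv w F) m = fderiv ℝ (fderiv ℝ F) m v w := by
  have h2 : DifferentiableAt ℝ (fderiv ℝ F) m :=
    ((hF.fderiv_right (m := 1) (by exact WithTop.coe_le_coe.2 le_top)).differentiable one_ne_zero).differentiableAt
  have h := fderiv_clm_apply h2 (differentiableAt_const w)
  show fderiv ℝ (fun y => fderiv ℝ F y w) m v = _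
  rw [h]
  simp

lemma pdv_symm {F : E → ℝ} (hF : ContDiff ℝ (⊤ : ℕ∞) F) (v w m : E) :
    pdv v (pdv w F) m = pdv w (pdv v F) m := by
  rw [pdv_pdv hF, pdv_pdv hF]
  exact second_derivative_symmetric
    (fun y => ((hF.differentiable (by simp)) y).hasFDerivAt)
    (((((hF.fderiv_right (m := 1) (by exact WithTop.coe_le_coe.2 le_top)).differentiable one_ne_zero)) m).hasFDerivAt) v w

lemma pdv_comp_snd {E₁ E₂ : Type*} [NormedAddCommGroup E₁] [NormedSpace ℝ E₁]
    [NormedAddCommGroup E₂] [NormedSpace ℝ E₂]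
    {c : E₂ → ℝ} {m : E₁ × E₂} (hc : DifferentiableAt ℝ c m.2) (v : E₁ × E₂) :
    pdv v (fun y => c y.2) m = pdv v.2 c m.2 := by
  have h : HasFDerivAt (fun y : E₁ × E₂ => c y.2)
      ((fderiv ℝ c m.2).comp (ContinuousLinearMap.snd ℝ E₁ E₂)) m :=
    hc.hasFDerivAt.comp m hasFDerivAt_snd
  simp [pdv, h.fderiv]

end helpers

lemma pdv_zero' {E : Type*} [NormedAddCommGroup E] [NormedSpace ℝ E]
    (F : E → ℝ) (m : E) : pdv (0 : E) F m = 0 := (fderiv ℝ F m).map_zero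

lemma pdX_def (n k : ℕ) (i : Fin n) (F : KPt n k → ℝ) :
    pdX n k i F = pdv ((0 : Fin k → Fin n → ℝ), Pi.single i 1) F := rfl

lemma pdXi_def (n k : ℕ) (p : Fin k) (i : Fin n) (F : KPt n k → ℝ) :
    pdXi n k p i F = pdv ((Pi.single p (Pi.single i 1) : Fin k → Fin n → ℝ),
      (0 : Fin n → ℝ)) F := rfl


theorem kBracket_isHamiltonianMap (n k : ℕ) (hn : 1 ≤ n) (hk : 1 ≤ k)
    (H K : KPt n k → Fin k → ℝ)
    (hH : ContDiff ℝ (⊤ : ℕ∞) H) (hK : ContDiff ℝ (⊤ : ℕ∞) K)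
    (hHham : IsHamiltonianMap n k H) (hKham : IsHamiltonianMap n k K) :
    IsHamiltonianMap n k (kBracket n k H K) := by
  obtain ⟨X, hXs, hXfol, hXA, hXB⟩ := hHham
  obtain ⟨Y, hYs, hYfol, hYA, hYB⟩ := hKham
  set b : (Fin n → ℝ) → Fin n → ℝ := fun x => (X (0, x)).2 with hb
  set d : (Fin n → ℝ) → Fin n → ℝ := fun x => (Y (0, x)).2 with hd
  have hbX : ∀ m : KPt n k, (X m).2 = b m.2 := fun m => hXfol m (0, m.2) rfl
  have hdY : ∀ m : KPt n k, (Y m).2 = d m.2 := fun m => hYfol m (0, m.2) rfl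
  have hbs : ContDiff ℝ (⊤ : ℕ∞) b :=
    (contDiff_snd.comp hXs).comp (contDiff_const.prodMk contDiff_id)
  have hds : ContDiff ℝ (⊤ : ℕ∞) d :=
    (contDiff_snd.comp hYs).comp (contDiff_const.prodMk contDiff_id)
  have hf : ∀ p, ContDiff ℝ (⊤ : ℕ∞) (fun m => H m p) := fun p => contDiff_pi.1 hH p
  have hg : ∀ p, ContDiff ℝ (⊤ : ℕ∞) (fun m => K m p) := fun p => contDiff_pi.1 hK p
  have hY1 : ∀ (p : Fin k) (s : Fin n),
      ContDiff ℝ (⊤ : ℕ∞) (fun m : KPt n k => (Y m).1 p s) :=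
    fun p s => contDiff_pi.1 (contDiff_pi.1 (contDiff_fst.comp hYs) p) s
  have hX1 : ∀ (p : Fin k) (s : Fin n),
      ContDiff ℝ (⊤ : ℕ∞) (fun m : KPt n k => (X m).1 p s) :=
    fun p s => contDiff_pi.1 (contDiff_pi.1 (contDiff_fst.comp hXs) p) s
  have hb2 : ∀ s, ContDiff ℝ (⊤ : ℕ∞) (fun m : KPt n k => b m.2 s) :=
    fun s => (contDiff_pi.1 hbs s).comp contDiff_snd
  have hd2 : ∀ s, ContDiff ℝ (⊤ : ℕ∞) (fun m : KPt n k => d m.2 s) :=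
    fun s => (contDiff_pi.1 hds s).comp contDiff_snd
  have hFb_eq : ∀ p : Fin k, (fun m => kBracket n k H K m p)
      = fun m : KPt n k => ∑ s, (b m.2 s * (Y m).1 p s - d m.2 s * (X m).1 p s) := by
    intro p; funext m
    unfold kBracket
    refine Finset.sum_congr rfl fun s _ => ?_
    have e1 : pdX n k s (fun q => H q p) m = -(X m).1 p s := by
      rw [hXA m p s, neg_neg]
    have e2 : pdXi n k p s (fun q => H q p) m = b m.2 s := by
      rw [← hXB m p s, hbX]
    have e3 : pdX n k s (fun q => K q p) m = -(Y m).1 p s := by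
      rw [hYA m p s, neg_neg]
    have e4 : pdXi n k p s (fun q => K q p) m = d m.2 s := by
      rw [← hYB m p s, hdY]
    rw [e1, e2, e3, e4]; ring
  have hFb : ∀ p, ContDiff ℝ (⊤ : ℕ∞) (fun m => kBracket n k H K m p) := by
    intro p
    rw [hFb_eq]
    exact ContDiff.sum fun s _ =>
      ((hb2 s).mul (hY1 p s)).sub ((hd2 s).mul (hX1 p s))
  refine ⟨fun m => (fun p i => -pdX n k i (fun m' => kBracket n k H K m' p) m,
      fun i => ∑ s, (d m.2 s * pdv (Pi.single s 1) (fun x => b x i) m.2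
        - b m.2 s * pdv (Pi.single s 1) (fun x => d x i) m.2)), ?_, ?_, ?_, ?_⟩
  · -- smoothness
    apply ContDiff.prodMk
    · refine contDiff_pi.2 fun p => contDiff_pi.2 fun i => ?_
      simp only [pdX_def]
      exact (pdv_contDiff (hFb p) _).neg
    · refine contDiff_pi.2 fun i => ContDiff.sum fun s _ => ?_
      exact ((hd2 s).mul
          ((pdv_contDiff (contDiff_pi.1 hbs i) (Pi.single s 1)).comp contDiff_snd)).sub
        ((hb2 s).mul
          ((pdv_contDiff (contDiff_pi.1 hds i) (Pi.single s 1)).comp contDiff_snd))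
  · -- foliated
    intro m m' h
    dsimp only
    rw [h]
  · -- ξ-component condition
    intro m p i
    rfl
  · -- x-component condition
    intro m p i
    dsimp only
    rw [show (fun q => kBracket n k H K q p) = _ from hFb_eq p]
    rw [pdXi_def]
    rw [pdv_sum (fun s => ((((hb2 s).mul (hY1 p s)).sub
      ((hd2 s).mul (hX1 p s))).differentiable (by simp)).differentiableAt) _]
    refine Finset.sum_congr rfl fun s _ => ?_
    set vξ : KPt n k := ((Pi.single p (Pi.single i 1) : Fin k → Fin n → ℝ),
      (0 : Fin n → ℝ)) with hvξ
    set vxs : KPt n k := ((0 : Fin k → Fin n → ℝ), Pi.single s 1) with hvxs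
    have dbs : DifferentiableAt ℝ (fun m : KPt n k => b m.2 s) m :=
      ((hb2 s).differentiable (by simp)).differentiableAt
    have dds : DifferentiableAt ℝ (fun m : KPt n k => d m.2 s) m :=
      ((hd2 s).differentiable (by simp)).differentiableAt
    have dY1 : DifferentiableAt ℝ (fun m : KPt n k => (Y m).1 p s) m :=
      ((hY1 p s).differentiable (by simp)).differentiableAt
    have dX1 : DifferentiableAt ℝ (fun m : KPt n k => (X m).1 p s) m :=
      ((hX1 p s).differentiable (by simp)).differentiableAt
    rw [pdv_sub (dbs.fun_mul dY1) (dds.fun_mul dX1), pdv_mul dbs dY1, pdv_mul dds dX1]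
    -- derivatives of the x-only functions in the ξ direction vanish
    have hzb : pdv vξ (fun m : KPt n k => b m.2 s) m = 0 := by
      rw [pdv_comp_snd (c := fun x => b x s)
        ((contDiff_pi.1 hbs s).differentiable (by simp)).differentiableAt]
      exact pdv_zero' _ _
    have hzd : pdv vξ (fun m : KPt n k => d m.2 s) m = 0 := by
      rw [pdv_comp_snd (c := fun x => d x s)
        ((contDiff_pi.1 hds s).differentiable (by simp)).differentiableAt]
      exact pdv_zero' _ _
    -- mixed second derivatives via symmetry
    have hY1eq : (fun m : KPt n k => (Y m).1 p s)
        = fun m => -pdv vxs (fun q => K q p) m := by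
      funext m'; rw [hYA m' p s]; rfl
    have hX1eq : (fun m : KPt n k => (X m).1 p s)
        = fun m => -pdv vxs (fun q => H q p) m := by
      funext m'; rw [hXA m' p s]; rfl
    have hgi : pdv vξ (fun q => K q p) = fun m : KPt n k => d m.2 i := by
      funext m'
      rw [show pdv vξ (fun q => K q p) m' = pdXi n k p i (fun q => K q p) m' from rfl,
        ← hYB m' p i, hdY m']
    have hfi : pdv vξ (fun q => H q p) = fun m : KPt n k => b m.2 i := by
      funext m'
      rw [show pdv vξ (fun q => H q p) m' = pdXi n k p i (fun q => H q p) m' from rfl,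
        ← hXB m' p i, hbX m']
    have hYd : pdv vξ (fun m : KPt n k => (Y m).1 p s) m
        = -pdv (Pi.single s 1) (fun x => d x i) m.2 := by
      rw [hY1eq, pdv_neg, pdv_symm (hg p), hgi,
        pdv_comp_snd (c := fun x => d x i)
          ((contDiff_pi.1 hds i).differentiable (by simp)).differentiableAt]
    have hXd : pdv vξ (fun m : KPt n k => (X m).1 p s) m
        = -pdv (Pi.single s 1) (fun x => b x i) m.2 := by
      rw [hX1eq, pdv_neg, pdv_symm (hf p), hfi,
        pdv_comp_snd (c := fun x => b x i)
          ((contDiff_pi.1 hbs i).differentiable (by simp)).differentiableAt]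
    rw [hzb, hzd, hYd, hXd]
    ring
end

section
/- Let f, g¹, g² : ℝ → ℝ be smooth, H¹(x,y,z) = f(z)x + g¹(z), H²(x,y,z) = f(z)y + g²(z). Then the Nambu dynamical system X_H^N and the Hamiltonian vector field X_H of the canonical 2-symplectic structure on ℝ³ are related by X_H^N(x,y,z) = f(z) · X_H(x,y,z) at every point; explicitly, D(H¹,H²)/D(y,z) = −f(z)(f′(z)x + (g¹)′(z)), D(H¹,H²)/D(z,x) = −f(z)(f′(z)y + (g²)′(z)), and D(H¹,H²)/D(x,y) = f(z)². -/
/-!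
STATEMENT 10: On ℝ³ with coordinates (x,y,z), the canonical 2-symplectic
structure θ¹ = dx∧dz, θ² = dy∧dz, E = ker dz, and H¹(x,y,z) = f(z)x + g¹(z),
H²(x,y,z) = f(z)y + g²(z) (f, g¹, g² smooth), the Nambu dynamical system
X_H^N = (D(H¹,H²)/D(y,z), D(H¹,H²)/D(z,x), D(H¹,H²)/D(x,y)) and the
Hamiltonian vector field
X_H = (−(f′(z)x + (g¹)′(z)), −(f′(z)y + (g²)′(z)), f(z)) satisfy
X_H^N = f(z)·X_H; explicitly D(H¹,H²)/D(y,z) = −f(z)(f′(z)x + (g¹)′(z)),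
D(H¹,H²)/D(z,x) = −f(z)(f′(z)y + (g²)′(z)), D(H¹,H²)/D(x,y) = f(z)².
-/

/-- D(F,G)/D(u,v) = ∂F/∂u·∂G/∂v − ∂F/∂v·∂G/∂u, where the partial derivatives
are directional derivatives along the coordinate directions u, v of ℝ³. -/
noncomputable def jac2 (F G : ℝ × ℝ × ℝ → ℝ) (u v : ℝ × ℝ × ℝ) (m : ℝ × ℝ × ℝ) : ℝ :=
  fderiv ℝ F m u * fderiv ℝ G m v - fderiv ℝ F m v * fderiv ℝ G m u


private lemma key (f g : ℝ → ℝ) (hf : ContDiff ℝ (⊤ : ℕ∞) f) (hg : ContDiff ℝ (⊤ : ℕ∞) g)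
    (c : (ℝ × ℝ × ℝ) →L[ℝ] ℝ) (m v : ℝ × ℝ × ℝ) :
    fderiv ℝ (fun p : ℝ × ℝ × ℝ => f p.2.2 * c p + g p.2.2) m v =
      deriv f m.2.2 * v.2.2 * c m + f m.2.2 * c v + deriv g m.2.2 * v.2.2 := by
  have hz : HasFDerivAt (fun p : ℝ × ℝ × ℝ => p.2.2)
      ((ContinuousLinearMap.snd ℝ ℝ ℝ).comp (ContinuousLinearMap.snd ℝ ℝ (ℝ × ℝ))) m :=
    ((ContinuousLinearMap.snd ℝ ℝ ℝ).comp (ContinuousLinearMap.snd ℝ ℝ (ℝ × ℝ))).hasFDerivAt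
  have hfz : HasFDerivAt (fun p : ℝ × ℝ × ℝ => f p.2.2)
      (deriv f m.2.2 • ((ContinuousLinearMap.snd ℝ ℝ ℝ).comp (ContinuousLinearMap.snd ℝ ℝ (ℝ × ℝ)))) m :=
    ((hf.differentiable (by simp) m.2.2).hasDerivAt).comp_hasFDerivAt m hz
  have hgz : HasFDerivAt (fun p : ℝ × ℝ × ℝ => g p.2.2)
      (deriv g m.2.2 • ((ContinuousLinearMap.snd ℝ ℝ ℝ).comp (ContinuousLinearMap.snd ℝ ℝ (ℝ × ℝ)))) m :=
    ((hg.differentiable (by simp) m.2.2).hasDerivAt).comp_hasFDerivAt m hz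
  have hc : HasFDerivAt (fun p : ℝ × ℝ × ℝ => c p) c m := c.hasFDerivAt
  have h : fderiv ℝ (fun p : ℝ × ℝ × ℝ => f p.2.2 * c p + g p.2.2) m = _ := ((hfz.mul hc).add hgz).fderiv
  rw [h]
  simp [ContinuousLinearMap.comp_apply]
  ring

theorem nambu_eq_f_smul_hamVF
    (f g1 g2 : ℝ → ℝ)
    (hf : ContDiff ℝ (⊤ : ℕ∞) f) (hg1 : ContDiff ℝ (⊤ : ℕ∞) g1) (hg2 : ContDiff ℝ (⊤ : ℕ∞) g2)
    (H1 H2 : ℝ × ℝ × ℝ → ℝ)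
    (hH1 : ∀ x y z : ℝ, H1 (x, y, z) = f z * x + g1 z)
    (hH2 : ∀ x y z : ℝ, H2 (x, y, z) = f z * y + g2 z) :
    ∀ x y z : ℝ,
      jac2 H1 H2 (0, 1, 0) (0, 0, 1) (x, y, z) =
          f z * (-(deriv f z * x + deriv g1 z)) ∧
      jac2 H1 H2 (0, 0, 1) (1, 0, 0) (x, y, z) =
          f z * (-(deriv f z * y + deriv g2 z)) ∧
      jac2 H1 H2 (1, 0, 0) (0, 1, 0) (x, y, z) = f z * f z := by
  have e1 : H1 = fun p : ℝ × ℝ × ℝ => f p.2.2 * (ContinuousLinearMap.fst ℝ ℝ (ℝ × ℝ)) p + g1 p.2.2 := by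
    funext p; obtain ⟨x, y, z⟩ := p; simpa using hH1 x y z
  have e2 : H2 = fun p : ℝ × ℝ × ℝ => f p.2.2 *
      ((ContinuousLinearMap.fst ℝ ℝ ℝ).comp (ContinuousLinearMap.snd ℝ ℝ (ℝ × ℝ))) p + g2 p.2.2 := by
    funext p; obtain ⟨x, y, z⟩ := p; simpa using hH2 x y z
  intro x y z
  refine ⟨?_, ?_, ?_⟩ <;>
  · simp only [jac2, e1, e2, key f g1 hf hg1, key f g2 hf hg2]
    simp
    try ring
end

section
/- Let k ≥ 1 and f, g¹,…,g^k : ℝ → ℝ be smooth, and on ℝ^{k+1} with coordinates (x¹,…,x^k,z) set Hᵖ(x¹,…,x^k,z) = f(z)xᵖ + gᵖ(z) for p = 1,…,k. Then the Nambu dynamical system X_H^N and the Hamiltonian vector field X_H = (−(f′(z)x¹+(g¹)′(z)), …, −(f′(z)x^k+(g^k)′(z)), f(z)) of the canonical k-symplectic structure on ℝ^{k+1} are related by X_H^N = (−1)^k f(z)^{k−1} · X_H; in particular the z-component of X_H^N equals (−1)^k f(z)^k and its xᵖ-component equals (−1)^{k−1}(f′(z)xᵖ + (gᵖ)′(z))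 f(z)^{k−1}. -/
/-!
STATEMENT 11: On ℝ^{k+1} with coordinates (x¹,…,x^k,z), the canonical
k-symplectic structure θᵖ = dxᵖ∧dz, E = ker dz, and Hᵖ = f(z)xᵖ + gᵖ(z)
(f, g¹,…,g^k smooth), the Nambu dynamical system, with j-th component
Σ_{i₁,…,i_k} ε_{j i₁…i_k} (∂H¹/∂x^{i₁})⋯(∂H^k/∂x^{i_k}), and the Hamiltonian
vector field X_H = (−(f′(z)x¹+(g¹)′(z)), …, −(f′(z)x^k+(g^k)′(z)), f(z))
satisfy X_H^N = (−1)^k f(z)^{k−1} · X_H: the z-component of X_H^N is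
(−1)^k f(z)^k and its xᵖ-component is (−1)^{k−1}(f′(z)xᵖ+(gᵖ)′(z)) f(z)^{k−1}.
-/

/-- Levi-Civita symbol on `m` indices: the sign of the permutation if the
index tuple is a bijection, and 0 otherwise. -/
noncomputable def leviCivita (m : ℕ) (σ : Fin m → Fin m) : ℝ :=
  if h : Function.Bijective σ then
    ((Equiv.Perm.sign (Equiv.ofBijective σ h) : ℤ) : ℝ)
  else 0

/-- j-th component of the Nambu dynamical system on ℝ^{k+1} associated to the
k functions H¹,…,H^k:
Σ_{i₁,…,i_k=1}^{k+1} ε_{j i₁…i_k} (∂H¹/∂x^{i₁})⋯(∂H^k/∂x^{i_k}). -/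
noncomputable def nambuComp (k : ℕ) (H : Fin k → (Fin (k + 1) → ℝ) → ℝ)
    (j : Fin (k + 1)) (ξ : Fin (k + 1) → ℝ) : ℝ :=
  ∑ i : Fin k → Fin (k + 1),
    leviCivita (k + 1) (Fin.cons j i) *
      ∏ p : Fin k, fderiv ℝ (H p) ξ (Pi.single (i p) 1)

lemma leviCivita_perm (m : ℕ) (e : Equiv.Perm (Fin m)) :
    leviCivita m ⇑e = ((Equiv.Perm.sign e : ℤ) : ℝ) := by
  rw [leviCivita, dif_pos e.bijective]
  have : Equiv.ofBijective (⇑e) e.bijective = e := Equiv.coe_fn_injective rfl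
  rw [this]

lemma leviCivita_eq_zero (m : ℕ) (σ : Fin m → Fin m) (h : ¬ Function.Injective σ) :
    leviCivita m σ = 0 := by
  rw [leviCivita, dif_neg (fun hb => h hb.1)]

lemma rotSymm_zero (k : ℕ) : (finRotate (k+1)).symm 0 = Fin.last k := by
  rw [Equiv.symm_apply_eq]; simp [finRotate_succ_apply, Fin.last_add_one]

lemma rotSymm_succ (k : ℕ) (p : Fin k) : (finRotate (k+1)).symm p.succ = p.castSucc := by
  rw [Equiv.symm_apply_eq]; simp [finRotate_succ_apply, Fin.coeSucc_eq_succ]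

lemma rot_eq (k : ℕ) : Fin.cons (Fin.last k) Fin.castSucc = ⇑(finRotate (k+1)).symm := by
  funext x
  induction x using Fin.cases with
  | zero => simp only [Fin.cons_zero, rotSymm_zero]
  | succ p => simp only [Fin.cons_succ, rotSymm_succ]

lemma lc_rot (k : ℕ) : leviCivita (k+1) (Fin.cons (Fin.last k) Fin.castSucc) = (-1)^k := by
  rw [rot_eq, leviCivita_perm, Equiv.Perm.sign_symm, sign_finRotate]
  simp

lemma swap_eq (k : ℕ) (q : Fin k) :
    Fin.cons (Fin.castSucc q) (fun p => if p = q then Fin.last k else Fin.castSucc p)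
      = ⇑((finRotate (k+1)).symm.trans (Equiv.swap (Fin.castSucc q) (Fin.last k))) := by
  funext x
  induction x using Fin.cases with
  | zero =>
      simp only [Fin.cons_zero, Equiv.trans_apply, rotSymm_zero, Equiv.swap_apply_right]
  | succ p =>
      simp only [Fin.cons_succ, Equiv.trans_apply, rotSymm_succ]
      by_cases h : p = q
      · subst h; simp [Equiv.swap_apply_left]
      · rw [if_neg h, Equiv.swap_apply_of_ne_of_ne
          (fun hc => h (Fin.castSucc_injective k hc)) (Fin.castSucc_lt_last p).ne]

lemma lc_swap (k : ℕ) (q : Fin k) :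
    leviCivita (k+1) (Fin.cons (Fin.castSucc q) (fun p => if p = q then Fin.last k else Fin.castSucc p))
      = (-1)^(k+1) := by
  rw [swap_eq, leviCivita_perm]
  have : (finRotate (k+1)).symm.trans (Equiv.swap (Fin.castSucc q) (Fin.last k))
      = (Equiv.swap (Fin.castSucc q) (Fin.last k)) * (finRotate (k+1)).symm := rfl
  rw [this, map_mul, Equiv.Perm.sign_swap (Fin.castSucc_lt_last q).ne,
    Equiv.Perm.sign_symm, sign_finRotate]
  push_cast
  ring

lemma partialH (k : ℕ) (f : ℝ → ℝ) (g : Fin k → ℝ → ℝ)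
    (hf : ContDiff ℝ (⊤ : ℕ∞) f) (hg : ∀ p, ContDiff ℝ (⊤ : ℕ∞) (g p))
    (H : Fin k → (Fin (k + 1) → ℝ) → ℝ)
    (hHdef : ∀ (p : Fin k) (ξ : Fin (k + 1) → ℝ),
      H p ξ = f (ξ (Fin.last k)) * ξ (Fin.castSucc p) + g p (ξ (Fin.last k)))
    (p : Fin k) (i : Fin (k+1)) (ξ : Fin (k+1) → ℝ) :
    fderiv ℝ (H p) ξ (Pi.single i 1) =
      (if i = Fin.last k then
        deriv f (ξ (Fin.last k)) * ξ p.castSucc + deriv (g p) (ξ (Fin.last k)) else 0)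
      + (if i = p.castSucc then f (ξ (Fin.last k)) else 0) := by
  have hHp : H p = fun ξ : Fin (k+1) → ℝ =>
      f (ξ (Fin.last k)) * ξ p.castSucc + g p (ξ (Fin.last k)) := funext (hHdef p)
  rw [hHp]
  have hp : ∀ m : Fin (k+1), HasFDerivAt (𝕜 := ℝ) (fun ξ : Fin (k+1) → ℝ => ξ m)
      (ContinuousLinearMap.proj m) ξ := fun m => hasFDerivAt_apply m ξ
  have hfz : HasDerivAt f (deriv f (ξ (Fin.last k))) (ξ (Fin.last k)) :=
    ((hf.differentiable (by simp)) _).hasDerivAt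
  have h1 : HasFDerivAt (fun ξ : Fin (k+1) → ℝ => f (ξ (Fin.last k)))
      ((deriv f (ξ (Fin.last k))) • ContinuousLinearMap.proj (Fin.last k)) ξ :=
    hfz.comp_hasFDerivAt ξ (hp _)
  have hgz : HasDerivAt (g p) (deriv (g p) (ξ (Fin.last k))) (ξ (Fin.last k)) :=
    (((hg p).differentiable (by simp)) _).hasDerivAt
  have h2 : HasFDerivAt (fun ξ : Fin (k+1) → ℝ => g p (ξ (Fin.last k)))
      ((deriv (g p) (ξ (Fin.last k))) • ContinuousLinearMap.proj (Fin.last k)) ξ :=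
    hgz.comp_hasFDerivAt ξ (hp _)
  have h3 : HasFDerivAt (fun ξ : Fin (k+1) → ℝ => f (ξ (Fin.last k)) * ξ p.castSucc + g p (ξ (Fin.last k))) _ ξ :=
    (h1.mul (hp p.castSucc)).add h2
  rw [h3.fderiv]
  have hlc : Fin.last k ≠ p.castSucc := (Fin.castSucc_lt_last p).ne'
  simp only [ContinuousLinearMap.add_apply, ContinuousLinearMap.smul_apply,
    ContinuousLinearMap.proj_apply, Pi.single_apply, smul_eq_mul]
  by_cases h1' : i = Fin.last k
  · subst h1'
    simp [hlc, Ne.symm hlc]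
    ring
  · by_cases h2' : i = p.castSucc
    · subst h2'
      simp [Ne.symm hlc, hlc]
    · simp [h1', h2', Ne.symm h1', Ne.symm h2']

theorem nambu_eq_pow_smul_hamVF (k : ℕ) (hk : 1 ≤ k)
    (f : ℝ → ℝ) (g : Fin k → ℝ → ℝ)
    (hf : ContDiff ℝ (⊤ : ℕ∞) f) (hg : ∀ p, ContDiff ℝ (⊤ : ℕ∞) (g p))
    (H : Fin k → (Fin (k + 1) → ℝ) → ℝ)
    (hHdef : ∀ (p : Fin k) (ξ : Fin (k + 1) → ℝ),
      H p ξ = f (ξ (Fin.last k)) * ξ (Fin.castSucc p) + g p (ξ (Fin.last k))) :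
    ∀ ξ : Fin (k + 1) → ℝ,
      (∀ p : Fin k,
        nambuComp k H (Fin.castSucc p) ξ =
          (-1 : ℝ) ^ k * (f (ξ (Fin.last k))) ^ (k - 1) *
            (-(deriv f (ξ (Fin.last k)) * ξ (Fin.castSucc p) +
                deriv (g p) (ξ (Fin.last k))))) ∧
      nambuComp k H (Fin.last k) ξ =
        (-1 : ℝ) ^ k * (f (ξ (Fin.last k))) ^ (k - 1) * f (ξ (Fin.last k)) := by
  intro ξ
  have hD := fun p i => partialH k f g hf hg H hHdef p i ξ
  have hinj : ∀ (j : Fin (k+1)) (b : Fin k → Fin (k+1)),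
      leviCivita (k+1) (Fin.cons j b) ≠ 0 → Function.Injective (Fin.cons j b) := by
    intro j b hlc
    by_contra h
    exact hlc (leviCivita_eq_zero _ _ h)
  have hmem : ∀ b : Fin k → Fin (k+1),
      (∏ p : Fin k, fderiv ℝ (H p) ξ (Pi.single (b p) 1)) ≠ 0 →
      ∀ p : Fin k, b p = Fin.last k ∨ b p = p.castSucc := by
    intro b hprod p
    have hfac := Finset.prod_ne_zero_iff.1 hprod p (Finset.mem_univ p)
    rw [hD p (b p)] at hfac
    by_contra hcon
    push_neg at hcon
    rw [if_neg hcon.1, if_neg hcon.2] at hfac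
    simp at hfac
  constructor
  · -- x^q components
    intro q
    rw [nambuComp, Finset.sum_eq_single_of_mem
      (fun p => if p = q then Fin.last k else Fin.castSucc p) (Finset.mem_univ _)]
    · rw [lc_swap]
      have hprod : (∏ p : Fin k, fderiv ℝ (H p) ξ
          (Pi.single ((fun p => if p = q then Fin.last k else Fin.castSucc p) p) 1))
          = ∏ p : Fin k, (if p = q then
              deriv f (ξ (Fin.last k)) * ξ q.castSucc + deriv (g q) (ξ (Fin.last k))
            else f (ξ (Fin.last k))) := by
        refine Finset.prod_congr rfl fun p _ => ?_
        by_cases hpq : p = q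
        · subst hpq
          rw [hD p]
          simp [(Fin.castSucc_lt_last p).ne']
        · rw [hD p]
          simp [hpq, (Fin.castSucc_lt_last p).ne, Fin.castSucc_injective k |>.eq_iff]
      rw [hprod, ← Finset.mul_prod_erase Finset.univ _ (Finset.mem_univ q), if_pos rfl,
        Finset.prod_congr rfl (fun p hp => if_neg (Finset.ne_of_mem_erase hp)),
        Finset.prod_const, Finset.card_erase_of_mem (Finset.mem_univ q),
        Finset.card_univ, Fintype.card_fin, pow_succ]
      ring
    · intro b _ hb
      by_contra hne
      obtain ⟨hlc, hprod⟩ := mul_ne_zero_iff.1 hne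
      have hbinj := hinj _ _ hlc
      have hm := hmem b hprod
      have hne0 : ∀ p : Fin k, b p ≠ Fin.castSucc q := by
        intro p hbp
        have : (Fin.cons (q.castSucc) b : Fin (k+1) → Fin (k+1)) p.succ = (Fin.cons (q.castSucc) b : Fin (k+1) → Fin (k+1)) 0 := by
          simp [hbp]
        exact Fin.succ_ne_zero p (hbinj this)
      apply hb
      funext p
      by_cases hpq : p = q
      · subst hpq
        have h := (hm p).resolve_right (hne0 p)
        simp [h]
      · rcases hm p with h | h
        · have hq : b q = Fin.last k := (hm q).resolve_right (hne0 q)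
          have he : (Fin.cons (q.castSucc) b : Fin (k+1) → Fin (k+1)) p.succ = (Fin.cons (q.castSucc) b : Fin (k+1) → Fin (k+1)) q.succ := by
            simp [h, hq]
          exact absurd (Fin.succ_injective _ (hbinj he)) hpq
        · simp [h, hpq]
  · -- z component
    rw [nambuComp, Finset.sum_eq_single_of_mem Fin.castSucc (Finset.mem_univ _)]
    · rw [lc_rot]
      have hprod : (∏ p : Fin k, fderiv ℝ (H p) ξ (Pi.single (Fin.castSucc p) 1))
          = ∏ _p : Fin k, f (ξ (Fin.last k)) := by
        refine Finset.prod_congr rfl fun p _ => ?_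
        rw [hD p]
        simp [(Fin.castSucc_lt_last p).ne]
      rw [hprod, Finset.prod_const, Finset.card_univ, Fintype.card_fin]
      have hk1 : k - 1 + 1 = k := by omega
      rw [mul_assoc, ← pow_succ, hk1]
    · intro b _ hb
      by_contra hne
      obtain ⟨hlc, hprod⟩ := mul_ne_zero_iff.1 hne
      have hbinj := hinj _ _ hlc
      have hm := hmem b hprod
      apply hb
      funext p
      refine (hm p).resolve_left fun hbp => ?_
      have : (Fin.cons (Fin.last k) b : Fin (k+1) → Fin (k+1)) p.succ = (Fin.cons (Fin.last k) b : Fin (k+1) → Fin (k+1)) 0 := by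
        simp [hbp]
      exact Fin.succ_ne_zero p (hbinj this)
end
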